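/- Let t₀ ≥ 0, let φ ∈ C([-r,0],𝕂ⁿ), and let g : [t₀,∞) → 𝕂ⁿ be locally Lebesgue integrable. If x : [t₀-r,∞) → 𝕂ⁿ is continuous, x(t₀+θ) = φ(θ) for all θ ∈ [-r,0], and x(t) = φ(0) + L(θ ↦ ∫_{t₀+θ}^{t+θ} x(s) ds) + ∫_{t₀}^t g(s) ds for all t ≥ t₀, then for almost every t ≥ t₀ the function x is differentiable at t with derivative L x_t + g(t), where x_t ∈ C([-r,0],𝕂ⁿ) is x_t(θ) = x(t+θ). -/

import Mathlib

open MeasureTheory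

section Aux
open Set intervalIntegral Filter Topology
lemma ae_hasDerivAt_primitive {E : Type*} [NormedAddCommGroup E] [NormedSpace ℝ E]
    [CompleteSpace E] {f : ℝ → E} (hf : LocallyIntegrable f volume) (a : ℝ) :
    ∀ᵐ x ∂(volume : Measure ℝ), HasDerivAt (fun u => ∫ t in a..u, f t) (f x) x := by
  have hii : ∀ b c : ℝ, IntervalIntegrable f volume b c := fun b c =>
    intervalIntegrable_iff.2 ((hf.integrableOn_isCompact isCompact_uIcc).mono_set
      Set.uIoc_subset_uIcc)
  filter_upwards [(IsUnifLocDoublingMeasure.vitaliFamily (volume : Measure ℝ)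
    1).ae_tendsto_average_norm_sub hf] with x hx
  rw [hasDerivAt_iff_tendsto]
  have key : ∀ y : ℝ, ((∫ t in a..y, f t) - (∫ t in a..x, f t)) - (y - x) • f x
      = ∫ t in x..y, (f t - f x) := by
    intro y
    rw [integral_interval_sub_left (hii a y) (hii a x),
      integral_sub (hii x y) intervalIntegrable_const, intervalIntegral.integral_const]
  have hG0 : ∀ y : ℝ, 0 ≤ ‖y - x‖⁻¹ * ‖((∫ t in a..y, f t) - (∫ t in a..x, f t)) - (y - x) • f x‖ :=
    fun y => by positivity
  rw [← nhdsNE_sup_pure x, ← nhdsLT_sup_nhdsGT x, tendsto_sup,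
    tendsto_sup]
  refine ⟨⟨?_, ?_⟩, ?_⟩
  · -- left limit
    have hten : Tendsto (fun y => ⨍ t in Icc y x, ‖f t - f x‖) (𝓝[<] x) (𝓝 0) :=
      hx.comp (Real.tendsto_Icc_vitaliFamily_left x)
    refine squeeze_zero' (Filter.Eventually.of_forall hG0) ?_ hten
    filter_upwards [self_mem_nhdsWithin] with y (hy : y < x)
    have hvol : (volume (Icc y x)).toReal = x - y := by
      rw [Real.volume_Icc, ENNReal.toReal_ofReal (by linarith)]
    rw [key, setAverage_eq, measureReal_def, hvol, smul_eq_mul]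
    have h1 : ‖∫ t in x..y, (f t - f x)‖ ≤ ∫ t in Icc y x, ‖f t - f x‖ := by
      rw [intervalIntegral.integral_symm, norm_neg]
      calc ‖∫ t in y..x, (f t - f x)‖ ≤ ∫ t in y..x, ‖f t - f x‖ :=
            intervalIntegral.norm_integral_le_integral_norm hy.le
        _ = ∫ t in Icc y x, ‖f t - f x‖ := by
            rw [intervalIntegral.integral_of_le hy.le, ← integral_Icc_eq_integral_Ioc]
    have h2 : ‖y - x‖⁻¹ = (x - y)⁻¹ := by
      rw [Real.norm_eq_abs, abs_of_nonpos (by linarith), neg_sub]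
    rw [h2]
    have hpos : (0:ℝ) < x - y := by linarith
    calc (x - y)⁻¹ * ‖∫ t in x..y, (f t - f x)‖
        ≤ (x - y)⁻¹ * ∫ t in Icc y x, ‖f t - f x‖ := by gcongr
      _ = _ := rfl
  · -- right limit
    have hten : Tendsto (fun y => ⨍ t in Icc x y, ‖f t - f x‖) (𝓝[>] x) (𝓝 0) :=
      hx.comp (Real.tendsto_Icc_vitaliFamily_right x)
    refine squeeze_zero' (Filter.Eventually.of_forall hG0) ?_ hten
    filter_upwards [self_mem_nhdsWithin] with y (hy : x < y)
    have hvol : (volume (Icc x y)).toReal = y - x := by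
      rw [Real.volume_Icc, ENNReal.toReal_ofReal (by linarith)]
    rw [key, setAverage_eq, measureReal_def, hvol, smul_eq_mul]
    have h1 : ‖∫ t in x..y, (f t - f x)‖ ≤ ∫ t in Icc x y, ‖f t - f x‖ := by
      calc ‖∫ t in x..y, (f t - f x)‖ ≤ ∫ t in x..y, ‖f t - f x‖ :=
            intervalIntegral.norm_integral_le_integral_norm hy.le
        _ = ∫ t in Icc x y, ‖f t - f x‖ := by
            rw [intervalIntegral.integral_of_le hy.le, ← integral_Icc_eq_integral_Ioc]
    have h2 : ‖y - x‖⁻¹ = (y - x)⁻¹ := by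
      rw [Real.norm_eq_abs, abs_of_nonneg (by linarith)]
    rw [h2]
    have hpos : (0:ℝ) < y - x := by linarith
    calc (y - x)⁻¹ * ‖∫ t in x..y, (f t - f x)‖
        ≤ (y - x)⁻¹ * ∫ t in Icc x y, ‖f t - f x‖ := by gcongr
      _ = _ := rfl
  · -- pure x
    have h := tendsto_pure_nhds (fun x' : ℝ =>
      ‖x' - x‖⁻¹ * ‖((∫ t in a..x', f t) - (∫ t in a..x, f t)) - (x' - x) • f x‖) x
    simpa using h

lemma hasDerivAt_shift_integral {E : Type*} [NormedAddCommGroup E] [NormedSpace ℝ E]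
    [CompleteSpace E] {r t₀ : ℝ} (hr : 0 < r) {x : ℝ → E} (hx : Continuous x)
    (Ψ χ : ℝ → C(Icc (-r) (0:ℝ), E))
    (hΨ : ∀ t (θ : Icc (-r) (0:ℝ)), Ψ t θ = ∫ s in (t₀ + (θ:ℝ))..(t + (θ:ℝ)), x s)
    (hχ : ∀ t (θ : Icc (-r) (0:ℝ)), χ t θ = x (t + (θ:ℝ))) (t : ℝ) :
    HasDerivAt Ψ (χ t) t := by
  rw [hasDerivAt_iff_isLittleO_nhds_zero, Asymptotics.isLittleO_iff]
  intro c hc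
  -- uniform continuity on a compact neighborhood
  have hK : IsCompact (Icc (t - r - 1) (t + 1)) := isCompact_Icc
  have huc : UniformContinuousOn x (Icc (t - r - 1) (t + 1)) :=
    hK.uniformContinuousOn_of_continuous hx.continuousOn
  rw [Metric.uniformContinuousOn_iff] at huc
  obtain ⟨δ, hδ, hδ'⟩ := huc c hc
  have hmem : Metric.ball (0:ℝ) (min δ 1) ∈ 𝓝 (0:ℝ) :=
    Metric.ball_mem_nhds 0 (lt_min hδ one_pos)
  filter_upwards [hmem] with h hh
  rw [Metric.mem_ball, dist_zero_right, Real.norm_eq_abs, lt_min_iff] at hh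
  obtain ⟨hhδ, hh1⟩ := hh
  refine (ContinuousMap.norm_le _ (by positivity)).2 fun θ => ?_
  obtain ⟨hθ1, hθ2⟩ := θ.2
  have hint : ∀ a b : ℝ, IntervalIntegrable x volume a b := fun a b => hx.intervalIntegrable a b
  have key : (Ψ (t + h) - Ψ t - h • χ t) θ
      = ∫ s in (t + (θ:ℝ))..(t + h + (θ:ℝ)), (x s - x (t + (θ:ℝ))) := by
    simp only [ContinuousMap.sub_apply, ContinuousMap.smul_apply]
    rw [hΨ, hΨ, hχ, integral_interval_sub_left (hint _ _) (hint _ _),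
      integral_sub (hint _ _) intervalIntegrable_const, intervalIntegral.integral_const]
    have : (t + h + (θ:ℝ)) - (t + (θ:ℝ)) = h := by ring
    rw [this]
  rw [key]
  have hb : ∀ s ∈ Set.uIoc (t + (θ:ℝ)) (t + h + (θ:ℝ)), ‖x s - x (t + (θ:ℝ))‖ ≤ c := by
    intro s hs
    have habs : |s - (t + (θ:ℝ))| ≤ |h| := by
      rcases Set.mem_uIoc.1 hs with hs | hs
      · obtain ⟨h1, h2⟩ := hs
        have := le_abs_self h
        have := neg_abs_le h
        exact abs_le.2 ⟨by linarith, by linarith⟩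
      · obtain ⟨h1, h2⟩ := hs
        have := le_abs_self h
        have := neg_abs_le h
        exact abs_le.2 ⟨by linarith, by linarith⟩
    have hrange : -|h| ≤ s - (t + (θ:ℝ)) ∧ s - (t + (θ:ℝ)) ≤ |h| := abs_le.1 habs
    have hsK : s ∈ Icc (t - r - 1) (t + 1) := by
      constructor <;> [skip; skip] <;> nlinarith [hrange.1, hrange.2, hh1.le, hθ1, hθ2]
    have htθK : (t + (θ:ℝ)) ∈ Icc (t - r - 1) (t + 1) := by
      constructor <;> linarith
    have := hδ' s hsK (t + (θ:ℝ)) htθK (by rw [Real.dist_eq]; exact habs.trans_lt hhδ)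
    rw [dist_eq_norm] at this
    exact this.le
  calc ‖∫ s in (t + (θ:ℝ))..(t + h + (θ:ℝ)), (x s - x (t + (θ:ℝ)))‖
      ≤ c * |(t + h + (θ:ℝ)) - (t + (θ:ℝ))| :=
        intervalIntegral.norm_integral_le_of_norm_le_const hb
    _ = c * ‖h‖ := by rw [Real.norm_eq_abs]; congr 1; ring_nf


end Aux

open Set intervalIntegral Filter Topology in
/-- If `x` is continuous on `[t₀-r,∞)`, coincides with the continuous history `φ` on
`[t₀-r,t₀]`, and satisfies `x(t) = φ(0) + L(θ ↦ ∫_{t₀+θ}^{t+θ} x(s) ds) + ∫_{t₀}^t g(s) ds`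
for all `t ≥ t₀`, then for almost every `t ≥ t₀` the function `x` is differentiable at `t`
with derivative `L x_t + g(t)`, where `x_t ∈ C([-r,0],𝕂ⁿ)` is `x_t(θ) = x(t+θ)`. -/
theorem stmt_8 {𝕜 : Type*} [RCLike 𝕜] {n : ℕ} (hn : 0 < n) {r : ℝ} (hr : 0 < r)
    (L : C(Set.Icc (-r) (0:ℝ), Fin n → 𝕜) →L[𝕜] (Fin n → 𝕜))
    (t₀ : ℝ) (ht₀ : 0 ≤ t₀)
    (φ : C(Set.Icc (-r) (0:ℝ), Fin n → 𝕜))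
    (g : ℝ → Fin n → 𝕜) (hg : LocallyIntegrableOn g (Set.Ici t₀))
    (x : ℝ → Fin n → 𝕜)
    (hxc : ContinuousOn x (Set.Ici (t₀ - r)))
    (hx0 : ∀ θ : Set.Icc (-r) (0:ℝ), x (t₀ + θ) = φ θ)
    (hxeq : ∀ t, t₀ ≤ t → ∃ ψ : C(Set.Icc (-r) (0:ℝ), Fin n → 𝕜),
      (∀ θ : Set.Icc (-r) (0:ℝ), ψ θ = ∫ s in (t₀ + (θ : ℝ))..(t + (θ : ℝ)), x s) ∧
      x t = φ ⟨0, Set.mem_Icc.mpr ⟨by linarith, le_rfl⟩⟩ + L ψ + ∫ s in t₀..t, g s) :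
    ∀ᵐ t ∂(volume.restrict (Set.Ici t₀)),
      ∃ χ : C(Set.Icc (-r) (0:ℝ), Fin n → 𝕜),
        (∀ θ : Set.Icc (-r) (0:ℝ), χ θ = x (t + θ)) ∧
        HasDerivAt x (L χ + g t) t := by
  -- continuous extension of x to all of ℝ
  set x' : ℝ → Fin n → 𝕜 := fun s => x (max s (t₀ - r)) with hx'def
  have hx' : Continuous x' :=
    hxc.comp_continuous (continuous_id.max continuous_const)
      (fun s => mem_Ici.2 (le_max_right _ _))
  have hx'eq : ∀ s, t₀ - r ≤ s → x' s = x s := fun s hs => by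
    simp only [hx'def, max_eq_left hs]
  -- extension of g
  set g' : ℝ → Fin n → 𝕜 := (Set.Ici t₀).indicator g with hg'def
  have hg'li : LocallyIntegrable g' volume := by
    rw [locallyIntegrable_iff]
    intro K hK
    rw [hg'def, IntegrableOn, integrable_indicator_iff measurableSet_Ici, IntegrableOn,
      Measure.restrict_restrict measurableSet_Ici]
    exact hg.integrableOn_compact_subset inter_subset_left (hK.inter_left isClosed_Ici)
  have hgg' : ∀ t, t₀ ≤ t → (∫ s in t₀..t, g s) = ∫ s in t₀..t, g' s := by
    intro t ht
    refine intervalIntegral.integral_congr fun s hs => ?_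
    rw [uIcc_of_le ht] at hs
    rw [hg'def, indicator_of_mem (mem_Ici.2 hs.1)]
  -- primitive of x'
  set P : ℝ → Fin n → 𝕜 := fun u => ∫ s in (t₀ - r)..u, x' s with hPdef
  have hP : Continuous P :=
    intervalIntegral.continuous_primitive (fun a b => hx'.intervalIntegrable a b) _
  set Ψ : ℝ → C(Set.Icc (-r) (0:ℝ), Fin n → 𝕜) := fun t =>
    ⟨fun θ => P (t + θ) - P (t₀ + θ),
      ((hP.comp (continuous_const.add continuous_subtype_val)).sub
        (hP.comp (continuous_const.add continuous_subtype_val)))⟩ with hΨdef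
  have hΨ : ∀ t (θ : Set.Icc (-r) (0:ℝ)), Ψ t θ = ∫ s in (t₀ + (θ:ℝ))..(t + (θ:ℝ)), x' s := by
    intro t θ
    exact integral_interval_sub_left (hx'.intervalIntegrable _ _) (hx'.intervalIntegrable _ _)
  set χ : ℝ → C(Set.Icc (-r) (0:ℝ), Fin n → 𝕜) := fun t =>
    ⟨fun θ => x' (t + θ), hx'.comp (continuous_const.add continuous_subtype_val)⟩ with hχdef
  have hχ : ∀ t (θ : Set.Icc (-r) (0:ℝ)), χ t θ = x' (t + (θ:ℝ)) := fun t θ => rfl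
  have hΨd : ∀ t, HasDerivAt Ψ (χ t) t := hasDerivAt_shift_integral hr hx' Ψ χ hΨ hχ
  -- the comparison function
  set c₀ : Fin n → 𝕜 := φ ⟨0, Set.mem_Icc.mpr ⟨by linarith, le_rfl⟩⟩ with hc₀def
  set F : ℝ → Fin n → 𝕜 := fun t => c₀ + L (Ψ t) + ∫ s in t₀..t, g' s with hFdef
  have hxF : ∀ t, t₀ ≤ t → x t = F t := by
    intro t ht
    obtain ⟨ψ, hψ, hxt⟩ := hxeq t ht
    have hψΨ : ψ = Ψ t := by
      refine ContinuousMap.ext fun θ => ?_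
      rw [hψ θ, hΨ t θ]
      apply intervalIntegral.integral_congr
      intro s hs
      rw [uIcc_of_le (by linarith : t₀ + (θ:ℝ) ≤ t + (θ:ℝ))] at hs
      have hθ1 := θ.2.1
      exact (hx'eq s (by linarith [hs.1])).symm
    rw [hFdef, hxt, hψΨ, hgg' t ht]
  -- a.e. facts
  have hprim : ∀ᵐ t ∂(volume : Measure ℝ),
      HasDerivAt (fun u => ∫ s in t₀..u, g' s) (g' t) t := ae_hasDerivAt_primitive hg'li t₀
  have hne : ∀ᵐ t ∂(volume : Measure ℝ), t ≠ t₀ := by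
    rw [ae_iff]
    have : {t : ℝ | ¬ t ≠ t₀} = {t₀} := by ext u; simp
    rw [this]
    exact measure_singleton t₀
  filter_upwards [ae_restrict_of_ae hprim, ae_restrict_of_ae hne,
    ae_restrict_mem measurableSet_Ici] with t hprimt hnet (htI : t₀ ≤ t)
  have htlt : t₀ < t := lt_of_le_of_ne htI (Ne.symm hnet)
  refine ⟨χ t, fun θ => ?_, ?_⟩
  · rw [hχ t θ]
    exact hx'eq _ (by linarith [θ.2.1])
  · have hFd : HasDerivAt F (L (χ t) + g' t) t := by
      have h1 : HasDerivAt (fun u => L (Ψ u)) (L (χ t)) t :=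
        ((L.restrictScalars ℝ).hasFDerivAt.comp_hasDerivAt t (hΨd t))
      exact ((h1.const_add c₀).add hprimt)
    have hgt : g' t = g t := indicator_of_mem (mem_Ici.2 htI) g
    rw [← hgt]
    refine hFd.congr_of_eventuallyEq ?_
    filter_upwards [isOpen_Ioi.mem_nhds htlt] with u (hu : t₀ < u)
    exact hxF u hu.le
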